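/- The subgroup of the group of units of the real quaternions generated by u₁ = (1 - k)/√2 and u₂ = (1 - j)/√2 is a finite group of order 48, and the generators satisfy u₂*u₁*u₂ = u₁*u₂*u₁ and u₁² = u₂*u₁²*u₂. -/

import Mathlib

open Quaternion

/-- The imaginary unit `j` of the real quaternions. -/
def quatJ : ℍ[ℝ] := ⟨0, 0, 1, 0⟩

/-- The imaginary unit `k` of the real quaternions. -/
def quatK : ℍ[ℝ] := ⟨0, 0, 0, 1⟩

/-- The unit quaternion `u₁ = (1 - k)/√2`. -/
noncomputable def u₁ : ℍ[ℝ] := (1 - quatK) / ((Real.sqrt 2 : ℝ) : ℍ[ℝ])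

/-- The unit quaternion `u₂ = (1 - j)/√2`. -/
noncomputable def u₂ : ℍ[ℝ] := (1 - quatJ) / ((Real.sqrt 2 : ℝ) : ℍ[ℝ])

/-- The binary octahedral group `2O`: the subgroup of the group of units of the
real quaternions generated by `u₁` and `u₂`. -/
noncomputable def binaryOctahedralGroup : Subgroup ℍ[ℝ]ˣ :=
  Subgroup.closure {x : ℍ[ℝ]ˣ | (x : ℍ[ℝ]) = u₁ ∨ (x : ℍ[ℝ]) = u₂}

/-! In the quaternions over `ℚ(√2)`, where equality is decidable, the subgroup generated by the
copies of `u₁` and `u₂` is found by a breadth-first search: it returns 48 distinct products of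
generators, closed under right multiplication by the generators. In a group such a finite set is
the generated subgroup, because right multiplication by a generator permutes it, so the set is also
closed under the inverses of the generators. The coordinatewise embedding `ℍ[ℚ(√2)] → ℍ[ℝ]` is an
injective ring homomorphism sending these generators to `u₁` and `u₂`; it carries the order and the
relations over. -/

namespace List

variable {M : Type*} [Monoid M]

structure ClosureInvariant (gens : List M) (p : List M × List M) : Prop where
  nodup : p.1.Nodup
  one_mem : 1 ∈ p.1
  frontier_subset : p.2 ⊆ p.1
  subset_closure : ∀ x ∈ p.1, x ∈ Submonoid.closure {g | g ∈ gens}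
  mul_mem : ∀ x ∈ p.1, x ∉ p.2 → ∀ g ∈ gens, x * g ∈ p.1

theorem closureInvariant_init (gens : List M) : ClosureInvariant gens ([1], [1]) where
  nodup := nodup_singleton 1
  one_mem := mem_singleton_self 1
  frontier_subset := Subset.refl _
  subset_closure x hx := by
    rw [eq_of_mem_singleton hx]
    exact one_mem _
  mul_mem x hx hx' := absurd hx hx'

variable [DecidableEq M]

/-- One round of the search on `(seen, frontier)`: multiply the frontier on the right by the
generators and keep the products not seen before as the new frontier. -/
def closureStep (gens : List M) (p : List M × List M) : List M × List M :=
  let new := ((p.2.flatMap fun x => gens.map (x * ·)).filter (· ∉ p.1)).dedup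
  (new ++ p.1, new)

def closureSearch (gens : List M) (n : ℕ) : List M × List M :=
  (closureStep gens)^[n] ([1], [1])

theorem mem_closureStep_snd {gens : List M} {p : List M × List M} {y : M} :
    y ∈ (closureStep gens p).2 ↔ (∃ x ∈ p.2, ∃ g ∈ gens, x * g = y) ∧ y ∉ p.1 := by
  simp [closureStep]

theorem ClosureInvariant.closureStep {gens : List M} {p : List M × List M}
    (h : ClosureInvariant gens p) : ClosureInvariant gens (closureStep gens p) where
  nodup := (nodup_dedup _).append h.nodup fun _ hy hy' => (mem_closureStep_snd.mp hy).2 hy'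
  one_mem := mem_append_right _ h.one_mem
  frontier_subset := subset_append_left _ _
  subset_closure y hy := by
    rcases mem_append.mp hy with hy | hy
    · obtain ⟨⟨x, hx, g, hg, rfl⟩, -⟩ := mem_closureStep_snd.mp hy
      exact Submonoid.mul_mem _ (h.subset_closure x (h.frontier_subset hx)) (Submonoid.subset_closure hg)
    · exact h.subset_closure y hy
  mul_mem x hx hx_new g hg := by
    rcases mem_append.mp hx with hx | hx
    · exact absurd hx hx_new
    refine mem_append.mpr ?_
    by_cases hx_frontier : x ∈ p.2
    · by_cases hxg : x * g ∈ p.1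
      · exact .inr hxg
      · exact .inl (mem_closureStep_snd.mpr ⟨⟨x, hx_frontier, g, hg, rfl⟩, hxg⟩)
    · exact .inr (h.mul_mem x hx hx_frontier g hg)

theorem closureInvariant_closureSearch (gens : List M) (n : ℕ) :
    ClosureInvariant gens (closureSearch gens n) := by
  induction n with
  | zero => exact closureInvariant_init gens
  | succ n ih =>
    rw [closureSearch, Function.iterate_succ_apply']
    exact ih.closureStep

end List

namespace Subgroup

variable {G : Type*} [Group G]

theorem coe_closure_eq_of_finite {S T : Set G} (hT : T.Finite) (h1 : 1 ∈ T)
    (hmul : ∀ x ∈ T, ∀ g ∈ S, x * g ∈ T) (hT_sub : T ⊆ Submonoid.closure S) :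
    (closure S : Set G) = T := by
  refine subset_antisymm (fun x hx => ?_) (hT_sub.trans (Submonoid.closure_le.mpr subset_closure))
  induction hx using closure_induction_right with
  | one => exact h1
  | mul_right x _ g hg hx => exact hmul x hx g hg
  | mul_inv_cancel x _ g hg hx =>
    have hbij : Set.BijOn (· * g) T T :=
      (hT.injOn_iff_bijOn_of_mapsTo fun y hy => hmul y hy g hg).mp (mul_left_injective g).injOn
    obtain ⟨y, hy, rfl⟩ := hbij.surjOn hx
    simpa using hy

theorem card_closure_eq_length_closureSearch [DecidableEq G] (gens : List G) (n : ℕ)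
    (h : (List.closureSearch gens n).2 = []) :
    Nat.card (closure {g | g ∈ gens}) = (List.closureSearch gens n).1.length := by
  have hinv := List.closureInvariant_closureSearch gens n
  have hcoe := coe_closure_eq_of_finite (List.finite_toSet _) hinv.one_mem
    (fun x hx g hg => hinv.mul_mem x hx (by simp [h]) g hg) hinv.subset_closure
  rw [← List.toFinset_card_of_nodup hinv.nodup, ← Set.ncard_coe_finset, List.coe_toFinset, ← hcoe]
  rfl

end Subgroup

namespace Quaternion

instance instDecidableEq {R : Type*} [Zero R] [One R] [Neg R] [DecidableEq R] :
    DecidableEq ℍ[R] :=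
  fun _ _ => decidable_of_iff' _ QuaternionAlgebra.ext_iff

variable {R S : Type*} [CommRing R] [CommRing S] (f : R →+* S)

def mapRingHom : ℍ[R] →+* ℍ[S] where
  toFun q := ⟨f q.re, f q.imI, f q.imJ, f q.imK⟩
  map_one' := by ext <;> simp
  map_mul' p q := by
    -- the anonymous constructors elaborate at `ℍ[S,-1,-1]`; restate them at `ℍ[S]` for `simp`
    change (⟨_, _, _, _⟩ : ℍ[S]) = (⟨_, _, _, _⟩ : ℍ[S]) * ⟨_, _, _, _⟩
    ext <;> simp <;> ring
  map_zero' := by ext <;> simp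
  map_add' p q := by
    change (⟨_, _, _, _⟩ : ℍ[S]) = (⟨_, _, _, _⟩ : ℍ[S]) + ⟨_, _, _, _⟩
    ext <;> simp

@[simp] theorem re_mapRingHom (q : ℍ[R]) : (mapRingHom f q).re = f q.re := rfl
@[simp] theorem imI_mapRingHom (q : ℍ[R]) : (mapRingHom f q).imI = f q.imI := rfl
@[simp] theorem imJ_mapRingHom (q : ℍ[R]) : (mapRingHom f q).imJ = f q.imJ := rfl
@[simp] theorem imK_mapRingHom (q : ℍ[R]) : (mapRingHom f q).imK = f q.imK := rfl

theorem mapRingHom_injective {f : R →+* S} (hf : Function.Injective f) :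
    Function.Injective (mapRingHom f) := by
  intro p q h
  rw [Quaternion.ext_iff] at h
  ext
  exacts [hf h.1, hf h.2.1, hf h.2.2.1, hf h.2.2.2]

end Quaternion

local notation "ℚ√2" => QuadraticAlgebra ℚ 2 0

-- Makes `ℚ√2` a field, so that ring homomorphisms out of it are injective.
instance : Fact (∀ r : ℚ, r ^ 2 ≠ 2 + 0 * r) := ⟨fun r h => by
  have hr : (r : ℝ) ^ 2 = 2 := by exact_mod_cast (by simpa using h : r ^ 2 = 2)
  refine irrational_sqrt_two ⟨|r|, ?_⟩
  rw [Rat.cast_abs, ← Real.sqrt_sq_eq_abs, hr]⟩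

noncomputable def sqrtTwoEmbedding : ℚ√2 →+* ℝ :=
  (QuadraticAlgebra.lift ⟨√2, by simp⟩).toRingHom

noncomputable def toRealQuaternion : ℍ[ℚ√2] →+* ℍ[ℝ] := Quaternion.mapRingHom sqrtTwoEmbedding

theorem toRealQuaternion_injective : Function.Injective toRealQuaternion :=
  Quaternion.mapRingHom_injective sqrtTwoEmbedding.injective

def invSqrtTwo : ℚ√2 := ⟨0, 1 / 2⟩

theorem sqrt_two_mul_sqrtTwoEmbedding_invSqrtTwo : √2 * sqrtTwoEmbedding invSqrtTwo = 1 := by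
  simp only [sqrtTwoEmbedding, invSqrtTwo, AlgHom.toRingHom_eq_coe, RingHom.coe_coe,
    QuadraticAlgebra.lift_apply_apply, Rat.smul_def]
  push_cast
  linear_combination Real.mul_self_sqrt (zero_le_two : (0 : ℝ) ≤ 2) / 2

def u₁' : ℍ[ℚ√2]ˣ :=
  ⟨⟨invSqrtTwo, 0, 0, -invSqrtTwo⟩, ⟨invSqrtTwo, 0, 0, invSqrtTwo⟩, by decide +kernel,
    by decide +kernel⟩

def u₂' : ℍ[ℚ√2]ˣ :=
  ⟨⟨invSqrtTwo, 0, -invSqrtTwo, 0⟩, ⟨invSqrtTwo, 0, invSqrtTwo, 0⟩, by decide +kernel,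
    by decide +kernel⟩

theorem coe_sqrt_two_ne_zero : ((√2 : ℝ) : ℍ[ℝ]) ≠ 0 :=
  Quaternion.coe_injective.ne (by positivity)

theorem toRealQuaternion_u₁' : toRealQuaternion u₁' = u₁ := by
  rw [u₁, eq_div_iff coe_sqrt_two_ne_zero, Quaternion.mul_coe_eq_smul]
  ext <;> simp [toRealQuaternion] <;>
    simp [u₁', quatK, sqrt_two_mul_sqrtTwoEmbedding_invSqrtTwo]

theorem toRealQuaternion_u₂' : toRealQuaternion u₂' = u₂ := by
  rw [u₂, eq_div_iff coe_sqrt_two_ne_zero, Quaternion.mul_coe_eq_smul]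
  ext <;> simp [toRealQuaternion] <;>
    simp [u₂', quatJ, sqrt_two_mul_sqrtTwoEmbedding_invSqrtTwo]

theorem closureSearch_u'_eight :
    (List.closureSearch [u₁', u₂'] 8).2 = [] ∧ (List.closureSearch [u₁', u₂'] 8).1.length = 48 := by
  decide +kernel

theorem card_closure_u' : Nat.card (Subgroup.closure {g | g ∈ [u₁', u₂']}) = 48 := by
  rw [Subgroup.card_closure_eq_length_closureSearch _ 8 closureSearch_u'_eight.1,
    closureSearch_u'_eight.2]

theorem binaryOctahedralGroup_eq_map :
    binaryOctahedralGroup =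
      (Subgroup.closure {g | g ∈ [u₁', u₂']}).map (Units.map toRealQuaternion.toMonoidHom) := by
  have hgens : {g | g ∈ [u₁', u₂']} = {u₁', u₂'} := by ext; simp
  rw [MonoidHom.map_closure, hgens, Set.image_pair, binaryOctahedralGroup]
  congr 1
  ext x
  simp [Units.ext_iff, toRealQuaternion_u₁', toRealQuaternion_u₂', eq_comm]

theorem stmt_10 :
    Nat.card binaryOctahedralGroup = 48 ∧
    u₂ * u₁ * u₂ = u₁ * u₂ * u₁ ∧
    u₁ ^ 2 = u₂ * u₁ ^ 2 * u₂ := by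
  refine ⟨?_, ?_, ?_⟩
  · rw [binaryOctahedralGroup_eq_map,
      Subgroup.card_map_of_injective (Units.map_injective toRealQuaternion_injective),
      card_closure_u']
  all_goals
    simp only [← toRealQuaternion_u₁', ← toRealQuaternion_u₂', ← map_mul, ← map_pow,
      ← Units.val_mul, ← Units.val_pow_eq_pow_val]
    congr 2
    decide +kernel
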